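/- Soundness of the constrained pruning rule: let π and π' be two partial paths of the same length i+1 ending in the same state s, with accumulated probabilities p ≥ p', and suppose every completion (suffix path of states and emissions) that extends π' into a full constrained run of length n also extends π into a full constrained run. Then the maximal probability of a full constrained run with prefix π' is at most the maximal probability of a full constrained run with prefix π; hence removing π' preserves the existence of a most probable constrained path. -/

import Mathlib

def runProb {S A : Type} (T : S → S → ℝ) (Em : S → A → ℝ) (n : ℕ)
    (st : Fin (n + 1) → S) (e : Fin n → A) : ℝ :=
  ∏ i : Fin n, T (st i.castSucc) (st i.succ) * Em (st i.succ) (e i)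

-- `hg` is what handles `t = ∅`, where the left side is the junk value `sSup ∅ = 0`.
theorem Real.sSup_image_mono {α : Type*} {f g : α → ℝ} {s t : Set α} (hts : t ⊆ s)
    (hfg : ∀ x ∈ t, f x ≤ g x) (hg : ∀ x ∈ s, 0 ≤ g x) (hbdd : BddAbove (g '' s)) :
    sSup (f '' t) ≤ sSup (g '' s) := by
  have hsup_nonneg : 0 ≤ sSup (g '' s) := Real.sSup_nonneg <| by
    rintro _ ⟨x, hx, rfl⟩
    exact hg x hx
  refine Real.sSup_le ?_ hsup_nonneg
  rintro _ ⟨x, hx, rfl⟩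
  exact (hfg x hx).trans (le_csSup hbdd ⟨x, hts hx, rfl⟩)

theorem runProb_nonneg {S A : Type} {T : S → S → ℝ} {Em : S → A → ℝ}
    (hT0 : ∀ s s' : S, 0 ≤ T s s') (hE0 : ∀ (s : S) (a : A), 0 ≤ Em s a) {n : ℕ}
    (st : Fin (n + 1) → S) (e : Fin n → A) : 0 ≤ runProb T Em n st e :=
  Finset.prod_nonneg fun _ _ => mul_nonneg (hT0 _ _) (hE0 _ _)

-- `Valid` / `Valid'` are the suffixes (the remaining `k` states, with remaining emissions `e'`)
-- completing the first / second prefix, both ending in `s`, to a full constrained run; a full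
-- run has probability the prefix's accumulated probability `p` / `p'` times the suffix factor
-- `runProb T Em k (Fin.cases s τ) e'`.
theorem prune_sound {S A : Type} [Fintype S]
    (T : S → S → ℝ) (Em : S → A → ℝ)
    (hT0 : ∀ s s' : S, 0 ≤ T s s') (hE0 : ∀ (s : S) (a : A), 0 ≤ Em s a)
    (k : ℕ) (e' : Fin k → A) (s : S)
    (p p' : ℝ) (hp'0 : 0 ≤ p') (hle : p' ≤ p)
    (Valid Valid' : Set (Fin k → S)) (hsub : Valid' ⊆ Valid) :
    sSup ((fun τ => p' * runProb T Em k (Fin.cases s τ) e') '' Valid')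
      ≤ sSup ((fun τ => p * runProb T Em k (Fin.cases s τ) e') '' Valid) := by
  have hrun (τ : Fin k → S) : 0 ≤ runProb T Em k (Fin.cases s τ) e' :=
    runProb_nonneg hT0 hE0 _ _
  exact Real.sSup_image_mono hsub
    (fun τ _ => mul_le_mul_of_nonneg_right hle (hrun τ))
    (fun τ _ => mul_nonneg (hp'0.trans hle) (hrun τ))
    ((Set.toFinite Valid).image _).bddAbove
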